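/- Consider the scalar system ė = −e/(1+e²) on ℝ with flow E(e,t), and its linearization along solutions δ̇ = −((1−E(e,t)²)/(1+E(e,t)²)) δ, whose solution from δ at time 0 is δE(δ,e,t) = exp( −t + ∫₀ᵗ 2E(e,s)²/(1+E(e,s)²) ds ) δ. Then for all e, δ in ℝ and all t ≥ 0, |δE(δ,e,t)| ≤ exp( −t + 2 k(|e|)² (1 − exp(−t)) ) |δ|, where k(s) = s exp(s²/2); in particular |δE(δ,e,t)| ≤ k̃(|e|) exp(−t)|δ| with k̃(s) = exp(2 s² exp(s²)). -/

import Mathlib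

/-!
Since `2x²/(1+x²) ≤ 2x²` and `|E(e,s)| ≤ k e^{-s}` with `k = |e| exp(e²/2)`, the integral in the
exponent of `δE` is at most `2k² ∫₀ᵗ e^{-2s} ds = k² (1 - e^{-2t}) ≤ 2k² (1 - e^{-t})`, the last
step being `(1 - e^{-t})² ≥ 0`. Bounding `1 - e^{-t}` by `1` then gives the second estimate.
-/

open Real Set MeasureTheory

lemma one_sub_exp_neg_two_mul_le (t : ℝ) : 1 - exp (-2 * t) ≤ 2 * (1 - exp (-t)) := by
  have h : exp (-2 * t) = exp (-t) ^ 2 := by rw [← exp_nat_mul]; ring_nf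
  nlinarith [sq_nonneg (1 - exp (-t))]

lemma integral_exp_neg_two_mul (t : ℝ) :
    ∫ s in (0:ℝ)..t, exp (-2 * s) = (1 - exp (-2 * t)) / 2 := by
  rw [intervalIntegral.integral_comp_mul_left (fun s => exp s) (by norm_num : (-2:ℝ) ≠ 0),
    integral_exp]
  simp only [mul_zero, exp_zero]
  ring

lemma intervalIntegral_le_of_nonneg_of_le_exp_neg_two_mul {g : ℝ → ℝ} {C t : ℝ} (ht : 0 ≤ t)
    (hg₀ : ∀ s ∈ Ioc 0 t, 0 ≤ g s) (hg : ∀ s ∈ Ioc 0 t, g s ≤ C * exp (-2 * s)) :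
    ∫ s in (0:ℝ)..t, g s ≤ C * (1 - exp (-2 * t)) / 2 := by
  -- `integral_mono_of_nonneg` needs no integrability of `g`: otherwise its integral is `0`.
  have hintegrable : Integrable (fun s => C * exp (-2 * s)) (volume.restrict (Ioc 0 t)) :=
    Continuous.integrableOn_Ioc (by fun_prop)
  calc ∫ s in (0:ℝ)..t, g s ≤ ∫ s in (0:ℝ)..t, C * exp (-2 * s) := by
        simp only [intervalIntegral.integral_of_le ht]
        exact integral_mono_of_nonneg ((ae_restrict_iff' measurableSet_Ioc).2 (.of_forall hg₀))
          hintegrable ((ae_restrict_iff' measurableSet_Ioc).2 (.of_forall hg))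
    _ = C * (1 - exp (-2 * t)) / 2 := by
        rw [intervalIntegral.integral_const_mul, integral_exp_neg_two_mul]; ring

lemma two_mul_sq_div_one_add_sq_le (x : ℝ) : 2 * x ^ 2 / (1 + x ^ 2) ≤ 2 * x ^ 2 :=
  div_le_self (by positivity) (by nlinarith [sq_nonneg x])

lemma integral_two_mul_sq_div_one_add_sq_le {x : ℝ → ℝ} {K t : ℝ} (ht : 0 ≤ t)
    (hx : ∀ s ∈ Ioc 0 t, |x s| ≤ K * exp (-s)) :
    ∫ s in (0:ℝ)..t, 2 * x s ^ 2 / (1 + x s ^ 2) ≤ 2 * K ^ 2 * (1 - exp (-t)) := by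
  have hbound : ∀ s ∈ Ioc 0 t, 2 * x s ^ 2 / (1 + x s ^ 2) ≤ 2 * K ^ 2 * exp (-2 * s) := by
    intro s hs
    have hsq : x s ^ 2 ≤ K ^ 2 * exp (-2 * s) := by
      calc x s ^ 2 ≤ (K * exp (-s)) ^ 2 :=
            sq_le_sq' (neg_le_of_abs_le (hx s hs)) (le_of_abs_le (hx s hs))
        _ = K ^ 2 * exp (-2 * s) := by rw [mul_pow, ← exp_nat_mul]; ring_nf
    linarith [two_mul_sq_div_one_add_sq_le (x s)]
  calc _ ≤ 2 * K ^ 2 * (1 - exp (-2 * t)) / 2 :=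
        intervalIntegral_le_of_nonneg_of_le_exp_neg_two_mul ht (fun s _ => by positivity) hbound
    _ ≤ 2 * K ^ 2 * (1 - exp (-t)) := by
        nlinarith [one_sub_exp_neg_two_mul_le t, sq_nonneg K]

theorem scalar_example_linearized_estimates
    (E : ℝ → ℝ → ℝ)
    (hdecay : ∀ e t, 0 ≤ t → |E e t| ≤ |e| * exp (e ^ 2 / 2) * exp (-t))
    -- the solution of the linearization along the solution through e
    (δE : ℝ → ℝ → ℝ → ℝ)
    (hδE : ∀ δ e t, δE δ e t =
      exp (-t + ∫ s in (0:ℝ)..t, 2 * (E e s) ^ 2 / (1 + (E e s) ^ 2)) * δ) :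
    ∀ δ e t : ℝ, 0 ≤ t →
      |δE δ e t| ≤ exp (-t + 2 * (|e| * exp (e ^ 2 / 2)) ^ 2 * (1 - exp (-t))) * |δ| ∧
      |δE δ e t| ≤ exp (2 * e ^ 2 * exp (e ^ 2)) * exp (-t) * |δ| := by
  intro δ e t ht
  have hexponent := integral_two_mul_sq_div_one_add_sq_le ht fun s hs => hdecay e s hs.1.le
  have hfirst : |δE δ e t| ≤ exp (-t + 2 * (|e| * exp (e ^ 2 / 2)) ^ 2 * (1 - exp (-t))) * |δ| := by
    rw [hδE, abs_mul, abs_exp]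
    gcongr
  refine ⟨hfirst, hfirst.trans ?_⟩
  have hK : (|e| * exp (e ^ 2 / 2)) ^ 2 = e ^ 2 * exp (e ^ 2) := by
    rw [mul_pow, sq_abs, ← exp_nat_mul]; ring_nf
  have hnonneg : 0 ≤ e ^ 2 * exp (e ^ 2) * exp (-t) := by positivity
  rw [hK, ← exp_add]
  refine mul_le_mul_of_nonneg_right (exp_le_exp.2 ?_) (abs_nonneg δ)
  linarith
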